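/- Assume k ≥ 2 and ξ ∈ ℕ are such that every grounded family of curves G with ω(G) ≤ k−1 satisfies χ(G) ≤ ξ. Let F be a grounded family of curves with ω(F) ≤ k and let ((P₁,S₁),…,(Pₙ,Sₙ)) be an n-bracket system in F. If χ(P_i) > (n−1)ξ for every i with 1 ≤ i ≤ n, then there exist curves s_i ∈ S_i (1 ≤ i ≤ n) such that s₁, …, sₙ pairwise intersect, i.e., {s₁,…,sₙ} is a clique in the intersection graph of F. -/

import Mathlib

open Set

attribute [local instance] Classical.propDecidable

abbrev Pt : Type := ℝ × ℝ

/-- The closed upper halfplane. -/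
def upperH : Set Pt := {p | 0 ≤ p.2}

/-- A curve: image of a continuous map from `[0,1]` to the plane. -/
def IsCurve (c : Set Pt) : Prop :=
  ∃ f : ℝ → Pt, ContinuousOn f (Set.Icc 0 1) ∧ f '' Set.Icc 0 1 = c

/-- A grounded curve: contained in the upper halfplane, meeting the baseline in exactly
one point which is an endpoint of the curve. -/
def IsGroundedCurve (c : Set Pt) : Prop :=
  (∃ f : ℝ → Pt, ContinuousOn f (Set.Icc 0 1) ∧ f '' Set.Icc 0 1 = c ∧ (f 0).2 = 0) ∧
  c ⊆ upperH ∧ (∃! p : Pt, p ∈ c ∧ p.2 = 0)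

/-- The (unique) point of a grounded curve on the baseline. -/
noncomputable def basepoint (c : Set Pt) : Pt :=
  if h : ∃ p : Pt, p ∈ c ∧ p.2 = 0 then h.choose else (0, 0)

/-- A grounded family of curves. -/
def IsGrounded (F : Set (Set Pt)) : Prop :=
  F.Finite ∧ (∀ c ∈ F, IsGroundedCurve c) ∧
  ∀ c ∈ F, ∀ d ∈ F, c ≠ d → basepoint c ≠ basepoint d

/-- `prec u v` : the basepoint of `u` lies to the left of that of `v`. -/
def prec (u v : Set Pt) : Prop := (basepoint u).1 < (basepoint v).1

/-- `F(u,v)`: the curves of `F` between `u` and `v`. -/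
def between (F : Set (Set Pt)) (u v : Set Pt) : Set (Set Pt) :=
  {c | c ∈ F ∧ prec u c ∧ prec c v}

/-- A proper coloring of the intersection graph of `F` with `m` colors. -/
def Colorable (F : Set (Set Pt)) (m : ℕ) : Prop :=
  ∃ φ : Set Pt → ℕ, (∀ c ∈ F, φ c < m) ∧
    ∀ c ∈ F, ∀ d ∈ F, c ≠ d → (c ∩ d).Nonempty → φ c ≠ φ d

/-- Chromatic number of the intersection graph of `F`. -/
noncomputable def chi (F : Set (Set Pt)) : ℕ := sInf {m | Colorable F m}

/-- `ω(F) ≤ k`: every clique (set of pairwise intersecting members) has at most `k` members. -/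
def cliqueLE (F : Set (Set Pt)) (k : ℕ) : Prop :=
  ∀ K : Finset (Set Pt), ↑K ⊆ F →
    (∀ c ∈ K, ∀ d ∈ K, c ≠ d → (c ∩ d).Nonempty) → K.card ≤ k

/-- Points of `upperH \ W` whose path-component in `upperH \ W` is unbounded. -/
def extOf (W : Set Pt) : Set Pt :=
  {x | x ∈ upperH \ W ∧ ¬ Bornology.IsBounded (pathComponentIn (upperH \ W) x)}

/-- The exterior of a family of curves. -/
def extFam (F : Set (Set Pt)) : Set Pt := extOf (⋃₀ F)

/-- A chosen parametrization of a grounded curve by `[0,1]` starting at its basepoint. -/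
noncomputable def param (c : Set Pt) : ℝ → Pt :=
  if h : ∃ f : ℝ → Pt, ContinuousOn f (Set.Icc 0 1) ∧ f '' Set.Icc 0 1 = c ∧ f 0 = basepoint c
  then h.choose else fun _ => (0, 0)

/-- `t₀ = inf {t : c(t) ∈ A}` for the chosen parametrization of `c`. -/
noncomputable def firstTime (c A : Set Pt) : ℝ :=
  sInf {t | t ∈ Set.Icc (0:ℝ) 1 ∧ param c t ∈ A}

/-- The first point of `c` on `A`. -/
noncomputable def firstPoint (c A : Set Pt) : Pt := param c (firstTime c A)

/-- The portion of `c` from its basepoint up to and including its first point on `A`. -/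
noncomputable def portionTo (c A : Set Pt) : Set Pt :=
  param c '' Set.Icc 0 (firstTime c A)

/-- The portion of `c` from its basepoint strictly before its first point on `A`. -/
noncomputable def portionBefore (c A : Set Pt) : Set Pt :=
  param c '' Set.Ico 0 (firstTime c A)

/-- The initial portion of `c` up to `A`; all of `c` if `c` is disjoint from `A`. -/
noncomputable def initialPortion (c A : Set Pt) : Set Pt :=
  if (c ∩ A).Nonempty then portionTo c A else c

/-- A skeleton `(u,v,S)` in `F`. -/
def IsSkeleton (F : Set (Set Pt)) (u v : Set Pt) (S : Set (Set Pt)) : Prop :=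
  u ∈ F ∧ v ∈ F ∧ prec u v ∧ (u ∩ v).Nonempty ∧ S ⊆ between F u v ∧
  ∀ s ∈ S, ∀ s' ∈ S, s ≠ s' → s ∩ s' = ∅

/-- `P` is supported by the skeleton `(u,v,S)`. -/
def SupportedBy (F : Set (Set Pt)) (u v : Set Pt) (S P : Set (Set Pt)) : Prop :=
  P ⊆ between F u v ∧
  (∀ p ∈ P, p ∩ u = ∅ ∧ p ∩ v = ∅) ∧
  ∀ p ∈ P, ∃ s ∈ S, (p ∩ initialPortion s (u ∪ v)).Nonempty

/-- The data of a bracket: the families `P`, `S` and the selection `p ↦ s(p)`. -/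
structure CBracket where
  P : Set (Set Pt)
  S : Set (Set Pt)
  sel : Set Pt → Set Pt

/-- `(P,S)` (with selection `sel`) is a bracket in `F`. -/
def IsCBracket (F : Set (Set Pt)) (B : CBracket) : Prop :=
  B.P ⊆ F ∧ B.S ⊆ F ∧
  ((∀ p ∈ B.P, ∀ s ∈ B.S, prec p s) ∨ (∀ p ∈ B.P, ∀ s ∈ B.S, prec s p)) ∧
  (∀ p ∈ B.P, ∃ s ∈ B.S, (p ∩ s).Nonempty) ∧
  (∀ p ∈ B.P, B.sel p ∈ B.S ∧ firstPoint p (⋃₀ B.S) ∈ B.sel p) ∧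
  ∀ s ∈ B.S, ∃ p ∈ B.P, firstPoint p (⋃₀ B.S) ∈ s

/-- `I(p)`: points of `upperH` not in any unbounded path-component of
`upperH \ (p' ∪ s(p) ∪ B(p))`. -/
noncomputable def CBracket.regionOf (B : CBracket) (p : Set Pt) : Set Pt :=
  upperH \ extOf (portionBefore p (⋃₀ B.S) ∪ B.sel p ∪
    segment ℝ (basepoint p) (basepoint (B.sel p)))

/-- The interior `I` of a bracket. -/
noncomputable def CBracket.inter (B : CBracket) : Set Pt := ⋂ p ∈ B.P, B.regionOf p

/-- The exterior `E` of a bracket. -/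
def CBracket.exter (B : CBracket) : Set Pt := extOf (⋃₀ (B.P ∪ B.S))

/-- An `n`-bracket system in `F`. -/
def IsCBracketSystem (F : Set (Set Pt)) {n : ℕ} (B : Fin n → CBracket) : Prop :=
  (∀ i, IsCBracket F (B i)) ∧
  (∀ i, ∀ p ∈ (B i).P, ∀ j, i < j → p ⊆ (B j).inter) ∧
  ∀ i, ∀ s ∈ (B i).S, (s ∩ ⋂ j ∈ {j | i < j}, (B j).exter).Nonempty

/-- A clique in `F` (a finite set of pairwise intersecting curves of `F`). -/
def IsCliqueIn (F : Set (Set Pt)) (K : Finset (Set Pt)) : Prop :=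
  ↑K ⊆ F ∧ ∀ c ∈ K, ∀ d ∈ K, c ≠ d → (c ∩ d).Nonempty

/-- `ℓ(K)`: the curve of `K` with leftmost basepoint. -/
noncomputable def lcur (K : Finset (Set Pt)) : Set Pt :=
  if h : ∃ c ∈ K, ∀ d ∈ K, d ≠ c → prec c d then h.choose else ∅

/-- `r(K)`: the curve of `K` with second leftmost basepoint. -/
noncomputable def rcur (K : Finset (Set Pt)) : Set Pt :=
  if h : ∃ c ∈ K, c ≠ lcur K ∧ ∀ d ∈ K, d ≠ c → d ≠ lcur K → prec c d
  then h.choose else ∅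

/-- `ℓ'(K)`: portion of `ℓ(K)` up to and including its first point on `r(K)`. -/
noncomputable def lport (K : Finset (Set Pt)) : Set Pt := portionTo (lcur K) (rcur K)

/-- `r'(K)`: portion of `r(K)` strictly before its first point on `ℓ'(K)`. -/
noncomputable def rport (K : Finset (Set Pt)) : Set Pt := portionBefore (rcur K) (lport K)

/-- `s` is left for `K`. -/
def leftFor (K : Finset (Set Pt)) (s : Set Pt) : Prop :=
  (s ∩ lport K).Nonempty ∧ portionTo s (lport K) ∩ rport K = ∅

/-- `s` is right for `K`. -/
def rightFor (K : Finset (Set Pt)) (s : Set Pt) : Prop :=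
  (s ∩ rport K).Nonempty ∧ portionTo s (rport K) ∩ lport K = ∅

/-- A `(k₁,…,kₙ)`-clique system in `F`. -/
def IsCliqueSystem (F : Set (Set Pt)) {n : ℕ} (ks : Fin n → ℕ)
    (K : Fin n → Finset (Set Pt)) : Prop :=
  (∀ i, IsCliqueIn F (K i) ∧ (K i).card = ks i) ∧
  ∀ i j : Fin n, i < j →
    ↑(K j) ⊆ between F (lcur (K i)) (rcur (K i)) ∧
    (∀ s ∈ K j, (s ∩ (lport (K i) ∪ rport (K i))).Nonempty) ∧
    ((∀ s ∈ K j, leftFor (K i) s) ∨ (∀ s ∈ K j, rightFor (K i) s))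

/-- `s` crosses the clique system `K`. -/
def Crosses (F : Set (Set Pt)) {n : ℕ} (K : Fin (n+1) → Finset (Set Pt)) (s : Set Pt) : Prop :=
  s ∈ between F (lcur (K (Fin.last n))) (rcur (K (Fin.last n))) ∧
  (s ∩ extOf (⋃ i, ⋃₀ (↑(K i) : Set (Set Pt)))).Nonempty

/-! Choose `pᵢ ∈ Pᵢ` greedily so that `pᵢ` misses `s(pⱼ)` for all `j < i`. The curves of `Pᵢ`
meeting one fixed `s(pⱼ) ∉ Pᵢ` form, together with `s(pⱼ)`, a family of clique number at most `k`,
so they have chromatic number at most `ξ`; as `χ(Pᵢ) > (n - 1) ξ`, some `pᵢ` avoids all of them.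
Now `s(pⱼ)` runs from the first point of `pⱼ` on `⋃ Sⱼ`, which lies in `Iᵢ ⊆ I(pᵢ)`, to the
exterior `Eᵢ`. The region `I(pᵢ)` is walled off by `pᵢ'`, `s(pᵢ)` and the baseline segment
`B(pᵢ)`, and a connected set can cross `B(pᵢ)` only by coming back up on the same side, so
`s(pⱼ)`, which misses `pᵢ`, has to meet `s(pᵢ)`. -/

open Metric Bornology

namespace Halfplane

def baseSegment (a b : ℝ) : Set Pt := (fun u : ℝ => ((u, 0) : Pt)) '' Icc a b

lemma isCompact_baseSegment (a b : ℝ) : IsCompact (baseSegment a b) :=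
  isCompact_Icc.image (continuous_id.prodMk continuous_const)

lemma snd_eq_zero_of_mem_baseSegment {a b : ℝ} {m : Pt} (hm : m ∈ baseSegment a b) :
    m.2 = 0 := by
  obtain ⟨u, -, rfl⟩ := hm
  rfl

lemma snd_eq_zero_of_mem_segment {x y : ℝ} {w : Pt} (hw : w ∈ segment ℝ ((x, 0) : Pt) (y, 0)) :
    w.2 = 0 := by
  obtain ⟨σ, τ, -, -, -, rfl⟩ := hw
  simp

lemma fst_mem_Ioo_of_mem_baseSegment {A : Set Pt} {a b : ℝ} (ha : ((a, 0) : Pt) ∈ A)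
    (hb : ((b, 0) : Pt) ∈ A) {m : Pt} (hm : m ∈ baseSegment a b) (hmA : m ∉ A) :
    m.1 ∈ Ioo a b := by
  obtain ⟨u, ⟨hau, hub⟩, rfl⟩ := hm
  refine ⟨hau.lt_of_ne ?_, hub.lt_of_ne ?_⟩ <;> rintro rfl <;> contradiction

lemma exists_ball_of_mem_baseSegment {A : Set Pt} (hA : IsClosed A) {a b : ℝ}
    (ha : ((a, 0) : Pt) ∈ A) (hb : ((b, 0) : Pt) ∈ A) {m : Pt} (hm : m ∈ baseSegment a b)
    (hmA : m ∉ A) :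
    ∃ r > 0, Disjoint (ball m r) A ∧ ∀ w ∈ ball m r, w.2 = 0 → w ∈ baseSegment a b := by
  obtain ⟨hau, hub⟩ := fst_mem_Ioo_of_mem_baseSegment ha hb hm hmA
  obtain ⟨r, hr, hrA⟩ := Metric.isOpen_iff.1 hA.isOpen_compl m hmA
  refine ⟨min r (min (m.1 - a) (b - m.1)), by simp [hr, hau, hub],
    Set.disjoint_left.2 fun w hw => hrA (ball_subset_ball (min_le_left _ _) hw), ?_⟩
  intro w hw hw2
  have hdist : |w.1 - m.1| < min r (min (m.1 - a) (b - m.1)) := by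
    rw [mem_ball, Prod.dist_eq, Real.dist_eq] at hw
    exact (le_max_left _ _).trans_lt hw
  simp only [lt_min_iff, abs_lt] at hdist
  exact ⟨w.1, ⟨by linarith, by linarith⟩, Prod.ext rfl hw2.symm⟩

lemma convex_snd_pos : Convex ℝ {w : Pt | 0 < w.2} :=
  (convex_Ioi 0).linear_preimage (LinearMap.snd ℝ ℝ ℝ)

lemma joinedIn_of_mem_ball {A : Set Pt} {m v : Pt} {r h : ℝ} (hrA : Disjoint (ball m r) A)
    (hm : m.2 = 0) (hv : v ∈ ball m r) (hv2 : 0 < v.2) (hh : h ∈ Ioo 0 r) :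
    JoinedIn ({w : Pt | 0 < w.2} \ A) v (m.1, h) := by
  have hmh : ((m.1, h) : Pt) ∈ ball m r := by
    rw [mem_ball, Prod.dist_eq, hm]
    simp [abs_of_pos hh.1, hh.2, hh.1.trans hh.2]
  refine (((convex_ball m r).inter convex_snd_pos).isPathConnected ⟨v, hv, hv2⟩).joinedIn
    v ⟨hv, hv2⟩ _ ⟨hmh, hh.1⟩ |>.mono ?_
  exact fun w hw => ⟨hw.2, hrA.notMem_of_mem_left hw.1⟩

lemma exists_horizontal_joinedIn {A : Set Pt} (hA : IsClosed A) {u u' : ℝ}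
    (hK : ∀ v ∈ uIcc u u', ((v, 0) : Pt) ∉ A) :
    ∃ δ > 0, ∀ h ∈ Ioo 0 δ, JoinedIn ({w : Pt | 0 < w.2} \ A) (u, h) (u', h) := by
  have hKc : IsCompact ((fun v : ℝ => ((v, 0) : Pt)) '' uIcc u u') :=
    isCompact_uIcc.image (continuous_id.prodMk continuous_const)
  obtain ⟨δ, hδ, hδA⟩ := hKc.exists_thickening_subset_open hA.isOpen_compl
    (by rintro _ ⟨v, hv, rfl⟩; exact hK v hv)
  refine ⟨δ, hδ, fun h hh => ?_⟩
  have hL : IsPathConnected ((fun v : ℝ => ((v, h) : Pt)) '' uIcc u u') :=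
    ((convex_uIcc u u').isPathConnected nonempty_uIcc).image
      (continuous_id.prodMk continuous_const)
  refine (hL.joinedIn _ ⟨u, left_mem_uIcc, rfl⟩ _ ⟨u', right_mem_uIcc, rfl⟩).mono ?_
  rintro _ ⟨v, hv, rfl⟩
  refine ⟨hh.1, hδA (mem_thickening_iff.2 ⟨(v, 0), ⟨v, hv, rfl⟩, ?_⟩)⟩
  simp [Prod.dist_eq, abs_of_pos hh.1, hh.2, hδ]

lemma setOf_snd_pos_diff_subset (A : Set Pt) (a b : ℝ) :
    {w : Pt | 0 < w.2} \ A ⊆ upperH \ (A ∪ baseSegment a b) := by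
  rintro w ⟨hw2 : 0 < w.2, hwA⟩
  refine ⟨hw2.le, ?_⟩
  rintro (h | h)
  · exact hwA h
  · exact hw2.ne' (snd_eq_zero_of_mem_baseSegment h)

lemma exists_first_mem_of_continuous {X : Type*} [TopologicalSpace X] {f : ℝ → X}
    (hf : Continuous f) {D : Set X} (hD : IsClosed D) (h0 : f 0 ∉ D) {t : ℝ} (ht : 0 ≤ t)
    (htD : f t ∈ D) : ∃ t₁ ∈ Ioc 0 t, f t₁ ∈ D ∧ ∀ s ∈ Ico 0 t₁, f s ∉ D := by
  set M := Icc 0 t ∩ f ⁻¹' D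
  have hMbdd : BddBelow M := ⟨0, fun s hs => hs.1.1⟩
  have ht₁ : sInf M ∈ M :=
    (isClosed_Icc.inter (hD.preimage hf)).csInf_mem ⟨t, ⟨ht, le_rfl⟩, htD⟩ hMbdd
  refine ⟨sInf M, ⟨ht₁.1.1.lt_of_ne fun h => h0 (h ▸ ht₁.2), ht₁.1.2⟩, ht₁.2, ?_⟩
  exact fun s hs hsD => (csInf_le hMbdd ⟨⟨hs.1, hs.2.le.trans ht₁.1.2⟩, hsD⟩).not_gt hs.2

/-- Take `m` to be the first point of `γ` on the segment: just before reaching it, `γ` runs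
through a small half-disk above `m`. -/
lemma exists_joinedIn_above_of_path {A : Set Pt} (hA : IsClosed A) {a b : ℝ}
    (ha : ((a, 0) : Pt) ∈ A) (hb : ((b, 0) : Pt) ∈ A) {z w : Pt} (γ : Path z w)
    (hγ : ∀ t, γ t ∈ upperH \ A) (hz : z ∉ baseSegment a b)
    (hmeet : ∃ t, γ t ∈ baseSegment a b) :
    ∃ m ∈ baseSegment a b, m ∉ A ∧ ∃ ε > 0, ∀ h ∈ Ioo 0 ε,
      JoinedIn (upperH \ (A ∪ baseSegment a b)) z (m.1, h) := by
  set f := γ.extend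
  have hf : Continuous f := γ.continuous_extend
  have hfX : ∀ t, f t ∈ upperH \ A := by
    intro t
    obtain ⟨s, hs⟩ : f t ∈ range γ := γ.extend_range ▸ mem_range_self t
    exact hs ▸ hγ s
  obtain ⟨t, ht⟩ := hmeet
  obtain ⟨t₁, ⟨ht₁pos, -⟩, ht₁D, hbefore⟩ :=
    exists_first_mem_of_continuous hf (isCompact_baseSegment a b).isClosed
      (by rwa [γ.extend_zero]) t.2.1 (by simpa [f] using ht)
  obtain ⟨r, hr, hrA, hrD⟩ := exists_ball_of_mem_baseSegment hA ha hb ht₁D (hfX t₁).2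
  obtain ⟨ρ, hρ, hρr⟩ := Metric.continuous_iff.1 hf t₁ r hr
  set s₀ := max 0 (t₁ - ρ / 2)
  have hs₀ : s₀ < t₁ := max_lt ht₁pos (by linarith)
  have hs₀ρ : dist s₀ t₁ < ρ := by
    rw [Real.dist_eq, abs_lt]
    constructor <;> linarith [le_max_right 0 (t₁ - ρ / 2)]
  have hfree : ∀ t ∈ Icc 0 s₀, f t ∈ upperH \ (A ∪ baseSegment a b) := by
    intro t ht
    refine ⟨(hfX t).1, ?_⟩
    rintro (h | h)
    · exact (hfX t).2 h
    · exact hbefore t ⟨ht.1, ht.2.trans_lt hs₀⟩ h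
  have hs₀mem : s₀ ∈ Icc 0 s₀ := ⟨le_max_left _ _, le_rfl⟩
  have hJ : JoinedIn (upperH \ (A ∪ baseSegment a b)) z (f s₀) := by
    refine ((((convex_Icc 0 s₀).isPathConnected ⟨s₀, hs₀mem⟩).image hf).joinedIn _
      ⟨0, ⟨le_rfl, le_max_left _ _⟩, γ.extend_zero⟩ _ ⟨s₀, hs₀mem, rfl⟩).mono ?_
    rintro _ ⟨t, ht, rfl⟩
    exact hfree t ht
  have hball : f s₀ ∈ ball (f t₁) r := hρr s₀ hs₀ρ
  have hpos : 0 < (f s₀).2 := (hfX s₀).1.lt_of_ne fun h =>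
    (hfree s₀ hs₀mem).2 (Or.inr (hrD _ hball h.symm))
  refine ⟨f t₁, ht₁D, (hfX t₁).2, r, hr, fun h hh => hJ.trans ?_⟩
  exact (joinedIn_of_mem_ball hrA (snd_eq_zero_of_mem_baseSegment ht₁D) hball hpos hh).mono
    (setOf_snd_pos_diff_subset A a b)

/-- A path from `z` that touches the segment enters it from above near its first contact point and
leaves it from above near its last one; a corridor just above the segment joins the two. -/
lemma pathComponentIn_subset_union_baseSegment {A : Set Pt} (hA : IsClosed A) {a b : ℝ}
    (ha : ((a, 0) : Pt) ∈ A) (hb : ((b, 0) : Pt) ∈ A) (hab : ∀ u ∈ Ioo a b, ((u, 0) : Pt) ∉ A)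
    {z : Pt} (hz : z ∉ baseSegment a b) :
    pathComponentIn (upperH \ A) z ⊆
      pathComponentIn (upperH \ (A ∪ baseSegment a b)) z ∪ baseSegment a b := by
  intro w hw
  by_cases hwD : w ∈ baseSegment a b
  · exact Or.inr hwD
  left
  set γ := JoinedIn.somePath hw
  have hγ : ∀ t, γ t ∈ upperH \ A := hw.somePath_mem
  by_cases hmeet : ∃ t, γ t ∈ baseSegment a b
  swap
  · push Not at hmeet
    refine ⟨γ, fun t => ⟨(hγ t).1, ?_⟩⟩
    rintro (h | h)
    · exact (hγ t).2 h
    · exact hmeet t h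
  have hmeet' : ∃ t, γ.symm t ∈ baseSegment a b := by
    obtain ⟨t, ht⟩ := hmeet
    exact ⟨unitInterval.symm t, by simpa using ht⟩
  obtain ⟨m, hm, hmA, ε, hε, hJ⟩ := exists_joinedIn_above_of_path hA ha hb γ hγ hz hmeet
  obtain ⟨m', hm', hm'A, ε', hε', hJ'⟩ :=
    exists_joinedIn_above_of_path hA ha hb γ.symm (fun t => hγ _) hwD hmeet'
  obtain ⟨hma, hmb⟩ := fst_mem_Ioo_of_mem_baseSegment ha hb hm hmA
  obtain ⟨hma', hmb'⟩ := fst_mem_Ioo_of_mem_baseSegment ha hb hm' hm'A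
  obtain ⟨δ, hδ, hC⟩ := exists_horizontal_joinedIn hA (u := m.1) (u' := m'.1) fun v hv =>
    hab v (Icc_subset_Ioo (lt_min hma hma') (max_lt hmb hmb') hv)
  obtain ⟨h, hh, hhε, hhε', hhδ⟩ : ∃ h : ℝ, 0 < h ∧ h < ε ∧ h < ε' ∧ h < δ :=
    ⟨min ε (min ε' δ) / 2, by positivity, by linarith [min_le_left ε (min ε' δ)],
      by linarith [min_le_right ε (min ε' δ), min_le_left ε' δ],
      by linarith [min_le_right ε (min ε' δ), min_le_right ε' δ]⟩
  exact (hJ h ⟨hh, hhε⟩).trans (((hC h ⟨hh, hhδ⟩).mono (setOf_snd_pos_diff_subset A a b)).trans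
    (hJ' h ⟨hh, hhε'⟩).symm)

lemma isBounded_pathComponentIn_of_segment {A : Set Pt} (hA : IsClosed A) {x y : ℝ}
    (hbase : ∀ u : ℝ, ((u, 0) : Pt) ∈ A ↔ u = x ∨ u = y) {z : Pt} (hz : 0 < z.2)
    (hbdd : IsBounded (pathComponentIn (upperH \ (A ∪ segment ℝ (x, 0) (y, 0))) z)) :
    IsBounded (pathComponentIn (upperH \ A) z) := by
  have hseg : segment ℝ ((x, 0) : Pt) (y, 0) = baseSegment (min x y) (max x y) := by
    rw [← Prod.image_mk_segment_left, segment_eq_uIcc]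
    rfl
  have hab : ∀ u ∈ Ioo (min x y) (max x y), ((u, 0) : Pt) ∉ A := by
    rintro u ⟨hxu, huy⟩ hu
    rcases (hbase u).1 hu with rfl | rfl <;>
      simp only [min_lt_iff, lt_max_iff, lt_irrefl, false_or, or_false] at hxu huy <;>
      linarith
  rw [hseg] at hbdd
  exact (hbdd.union (isCompact_baseSegment _ _).isBounded).subset
    (pathComponentIn_subset_union_baseSegment hA ((hbase _).2 (min_choice x y))
      ((hbase _).2 (max_choice x y)) hab fun h => hz.ne' (snd_eq_zero_of_mem_baseSegment h))

end Halfplane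

open Halfplane

lemma firstTime_mem_Icc (c A : Set Pt) : firstTime c A ∈ Icc (0 : ℝ) 1 := by
  unfold firstTime
  rcases {t | t ∈ Icc (0 : ℝ) 1 ∧ param c t ∈ A}.eq_empty_or_nonempty with h | h
  · rw [h, Real.sInf_empty]
    exact ⟨le_rfl, zero_le_one⟩
  · exact ⟨le_csInf h fun t ht => ht.1.1, (csInf_le ⟨0, fun t ht => ht.1.1⟩ h.some_mem).trans
      h.some_mem.1.2⟩

lemma portionTo_eq_portionBefore_union (c A : Set Pt) :
    portionTo c A = portionBefore c A ∪ {firstPoint c A} := by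
  rw [portionTo, portionBefore, firstPoint, ← image_singleton, ← image_union,
    Ico_union_right (firstTime_mem_Icc c A).1]

namespace IsGroundedCurve

variable {c : Set Pt} (hc : IsGroundedCurve c)
include hc

lemma basepoint_mem : basepoint c ∈ c ∧ (basepoint c).2 = 0 := by
  obtain ⟨⟨f, -, hfc, hf0⟩, -, -⟩ := hc
  have h : ∃ p : Pt, p ∈ c ∧ p.2 = 0 := ⟨f 0, hfc ▸ mem_image_of_mem f ⟨le_rfl, zero_le_one⟩, hf0⟩
  rw [basepoint, dif_pos h]
  exact h.choose_spec

lemma eq_basepoint {w : Pt} (hw : w ∈ c) (hw2 : w.2 = 0) : w = basepoint c :=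
  hc.2.2.unique ⟨hw, hw2⟩ hc.basepoint_mem

lemma mk_fst_basepoint : (((basepoint c).1, 0) : Pt) = basepoint c :=
  Prod.ext rfl hc.basepoint_mem.2.symm

lemma param_spec :
    ContinuousOn (param c) (Icc 0 1) ∧ param c '' Icc 0 1 = c ∧ param c 0 = basepoint c := by
  obtain ⟨f, hf, hfc, hf0⟩ := hc.1
  have h : ∃ f : ℝ → Pt, ContinuousOn f (Icc 0 1) ∧ f '' Icc 0 1 = c ∧ f 0 = basepoint c :=
    ⟨f, hf, hfc, hc.eq_basepoint (hfc ▸ mem_image_of_mem f ⟨le_rfl, zero_le_one⟩) hf0⟩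
  rw [param, dif_pos h]
  exact h.choose_spec

lemma isPathConnected : IsPathConnected c := by
  obtain ⟨hcont, himg, -⟩ := hc.param_spec
  exact himg ▸ ((convex_Icc 0 1).isPathConnected (nonempty_Icc.2 zero_le_one)).image' hcont

lemma isCompact : IsCompact c := by
  obtain ⟨hcont, himg, -⟩ := hc.param_spec
  exact himg ▸ isCompact_Icc.image_of_continuousOn hcont

lemma portionTo_subset (A : Set Pt) : portionTo c A ⊆ c :=
  (image_mono (Icc_subset_Icc le_rfl (firstTime_mem_Icc c A).2)).trans hc.param_spec.2.1.le

lemma isCompact_portionTo (A : Set Pt) : IsCompact (portionTo c A) :=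
  isCompact_Icc.image_of_continuousOn
    (hc.param_spec.1.mono (Icc_subset_Icc le_rfl (firstTime_mem_Icc c A).2))

lemma basepoint_mem_portionTo (A : Set Pt) : basepoint c ∈ portionTo c A :=
  ⟨0, ⟨le_rfl, (firstTime_mem_Icc c A).1⟩, hc.param_spec.2.2⟩

lemma firstPoint_mem (A : Set Pt) : firstPoint c A ∈ c :=
  hc.portionTo_subset A (by rw [portionTo_eq_portionBefore_union]; exact Or.inr rfl)

/-- Adding to `c'` its endpoint, which lies on `s`, turns `c' ∪ s` into the closed set
`A = portionTo c T ∪ s`; the bounded component of `z` then survives removing the baseline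
segment from the walls, and `d` carries `x` into it. -/
lemma notMem_extOf_of_disjoint {s T Y : Set Pt} {z x : Pt} (hs : IsGroundedCurve s)
    (hcT : firstPoint c T ∈ s) {d : Set Pt} (hd : IsPathConnected d) (hdH : d ⊆ upperH)
    (hdc : Disjoint d c) (hds : Disjoint d s) (hz : z ∈ d) (hz2 : 0 < z.2)
    (hzW : z ∉ extOf (portionBefore c T ∪ s ∪ segment ℝ (basepoint c) (basepoint s)))
    (hx : x ∈ d) (hY : c ∪ s ⊆ Y) : x ∉ extOf Y := by
  set A := portionTo c T ∪ s
  have hAcs : A ⊆ c ∪ s := union_subset_union_left s (hc.portionTo_subset T)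
  have hbase : ∀ u : ℝ, ((u, 0) : Pt) ∈ A ↔ u = (basepoint c).1 ∨ u = (basepoint s).1 := by
    intro u
    constructor
    · rintro (h | h)
      · exact Or.inl (congrArg Prod.fst (hc.eq_basepoint (hc.portionTo_subset T h) rfl))
      · exact Or.inr (congrArg Prod.fst (hs.eq_basepoint h rfl))
    · rintro (rfl | rfl)
      · exact Or.inl (hc.mk_fst_basepoint ▸ hc.basepoint_mem_portionTo T)
      · exact Or.inr (hs.mk_fst_basepoint ▸ hs.basepoint_mem.1)
  have hW : portionBefore c T ∪ s ∪ segment ℝ (basepoint c) (basepoint s) =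
      A ∪ segment ℝ ((basepoint c).1, 0) ((basepoint s).1, 0) := by
    rw [hc.mk_fst_basepoint, hs.mk_fst_basepoint, show A = portionTo c T ∪ s from rfl,
      portionTo_eq_portionBefore_union, union_assoc _ {_}, singleton_union, insert_eq_of_mem hcT]
  have hdA : Disjoint d A := (hdc.union_right hds).mono_right hAcs
  have hzbdd : IsBounded (pathComponentIn (upperH \ A) z) := by
    refine isBounded_pathComponentIn_of_segment
      ((hc.isCompact_portionTo T).union hs.isCompact).isClosed hbase hz2 (not_not.1 fun h => ?_)
    refine hzW (hW ▸ ⟨⟨hdH hz, ?_⟩, h⟩)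
    rintro (h' | h')
    · exact disjoint_left.1 hdA hz h'
    · exact hz2.ne' (snd_eq_zero_of_mem_segment h')
  have hxz : x ∈ pathComponentIn (upperH \ A) z :=
    (hd.joinedIn z hz x hx).mono fun w hw => ⟨hdH hw, disjoint_left.1 hdA hw⟩
  rintro ⟨-, hxunb⟩
  refine hxunb (hzbdd.subset ?_)
  rw [← pathComponentIn_congr hxz]
  exact pathComponentIn_mono (sdiff_subset_sdiff_right (hAcs.trans hY))

end IsGroundedCurve

lemma IsGrounded.subset {F G : Set (Set Pt)} (hF : IsGrounded F) (h : G ⊆ F) : IsGrounded G :=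
  ⟨hF.1.subset h, fun c hc => hF.2.1 c (h hc), fun c hc d hd => hF.2.2 c (h hc) d (h hd)⟩

namespace Colorable

variable {A B : Set (Set Pt)} {m m' : ℕ}

lemma mono (h : Colorable A m) (hm : m ≤ m') : Colorable A m' :=
  let ⟨φ, hφ, hφadj⟩ := h
  ⟨φ, fun c hc => (hφ c hc).trans_le hm, hφadj⟩

lemma subset (h : Colorable B m) (hAB : A ⊆ B) : Colorable A m :=
  let ⟨φ, hφ, hφadj⟩ := h
  ⟨φ, fun c hc => hφ c (hAB hc), fun c hc d hd => hφadj c (hAB hc) d (hAB hd)⟩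

lemma union (hA : Colorable A m) (hB : Colorable B m') : Colorable (A ∪ B) (m + m') := by
  obtain ⟨φ, hφ, hφadj⟩ := hA
  obtain ⟨ψ, hψ, hψadj⟩ := hB
  refine ⟨fun c => if c ∈ A then φ c else m + ψ c, ?_, ?_⟩
  · rintro c (hc | hc)
    · simpa [hc] using (hφ c hc).trans_le (Nat.le_add_right m m')
    · by_cases hcA : c ∈ A
      · simpa [hcA] using (hφ c hcA).trans_le (Nat.le_add_right m m')
      · simpa [hcA] using hψ c hc
  · intro c hc d hd hcd hcap
    by_cases hcA : c ∈ A <;> by_cases hdA : d ∈ A <;> simp only [hcA, hdA, if_true, if_false]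
    · exact hφadj c hcA d hdA hcd hcap
    · have := hφ c hcA; omega
    · have := hφ d hdA; omega
    · have := hψadj c (hc.resolve_left hcA) d (hd.resolve_left hdA) hcd hcap; omega

end Colorable

lemma colorable_singleton (c : Set Pt) : Colorable {c} 1 :=
  ⟨fun _ => 0, fun _ _ => zero_lt_one, fun _ hc _ hd hcd => absurd (hc.trans hd.symm) hcd⟩

lemma colorable_biUnion {ι : Type*} (I : Finset ι) (N : ι → Set (Set Pt)) {ξ : ℕ}
    (h : ∀ i ∈ I, Colorable (N i) ξ) : Colorable (⋃ i ∈ I, N i) (I.card * ξ) := by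
  classical
  induction I using Finset.induction_on with
  | empty => exact ⟨fun _ => 0, by simp, by simp⟩
  | insert a I haI ih =>
    rw [Finset.set_biUnion_insert, Finset.card_insert_of_notMem haI, add_mul, one_mul, add_comm]
    exact (h a (Finset.mem_insert_self a I)).union
      (ih fun i hi => h i (Finset.mem_insert_of_mem hi))

lemma colorable_chi {A : Set (Set Pt)} (hA : A.Finite) : Colorable A (chi A) := by
  obtain ⟨I, rfl⟩ := hA.exists_finset_coe
  have hI : Colorable (⋃ c ∈ I, {c}) (I.card * 1) :=
    colorable_biUnion I _ fun c _ => colorable_singleton c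
  rw [show (⋃ c ∈ I, {c}) = (I : Set (Set Pt)) by ext; simp, mul_one] at hI
  exact Nat.sInf_mem (s := {m | Colorable (I : Set (Set Pt)) m}) ⟨_, hI⟩

lemma chi_le_of_colorable {A : Set (Set Pt)} {m : ℕ} (h : Colorable A m) : chi A ≤ m :=
  Nat.sInf_le h

lemma cliqueLE_of_forall_inter_nonempty {F N : Set (Set Pt)} {k : ℕ} (homega : cliqueLE F k)
    {s : Set Pt} (hs : s ∈ F) (hN : N ⊆ F) (hsN : s ∉ N) (hmeet : ∀ q ∈ N, (q ∩ s).Nonempty) :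
    cliqueLE N (k - 1) := by
  classical
  intro K hKN hK
  have hsK : s ∉ K := fun h => hsN (hKN h)
  have hclique : ∀ c ∈ insert s K, ∀ d ∈ insert s K, c ≠ d → (c ∩ d).Nonempty := by
    simp only [Finset.mem_insert]
    rintro c (rfl | hc) d (rfl | hd) hcd
    · exact absurd rfl hcd
    · exact inter_comm c d ▸ hmeet d (hKN hd)
    · exact hmeet c (hKN hc)
    · exact hK c hc d hd hcd
  have := homega (insert s K) (by simpa [insert_subset_iff] using ⟨hs, hKN.trans hN⟩) hclique
  rw [Finset.card_insert_of_notMem hsK] at this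
  omega

lemma exists_mem_disjoint_of_chi_lt {F P : Set (Set Pt)} {k ξ : ℕ}
    (hind : ∀ G : Set (Set Pt), IsGrounded G → cliqueLE G (k - 1) → chi G ≤ ξ)
    (hF : IsGrounded F) (homega : cliqueLE F k) (hP : P ⊆ F) {ι : Type*} (I : Finset ι)
    (s : ι → Set Pt) (hs : ∀ i ∈ I, s i ∈ F ∧ s i ∉ P) (hchi : I.card * ξ < chi P) :
    ∃ q ∈ P, ∀ i ∈ I, Disjoint (s i) q := by
  by_contra! hno
  set N : ι → Set (Set Pt) := fun i => {q | q ∈ P ∧ (q ∩ s i).Nonempty}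
  have hNF : ∀ i, N i ⊆ F := fun i q hq => hP hq.1
  have hcol : ∀ i ∈ I, Colorable (N i) ξ := fun i hi =>
    (colorable_chi (hF.1.subset (hNF i))).mono <| hind _ (hF.subset (hNF i)) <|
      cliqueLE_of_forall_inter_nonempty homega (hs i hi).1 (hNF i) (fun h => (hs i hi).2 h.1)
        fun q hq => hq.2
  have hcover : P ⊆ ⋃ i ∈ I, N i := by
    intro q hq
    obtain ⟨i, hi, hiq⟩ := hno q hq
    exact mem_biUnion hi ⟨hq, inter_comm (s i) q ▸ not_disjoint_iff_nonempty_inter.1 hiq⟩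
  exact hchi.not_ge (chi_le_of_colorable ((colorable_biUnion I N hcol).subset hcover))

namespace IsCBracket

variable {F : Set (Set Pt)} {l : CBracket} (hl : IsCBracket F l)
include hl

lemma sel_spec {p : Set Pt} (hp : p ∈ l.P) :
    l.sel p ∈ l.S ∧ firstPoint p (⋃₀ l.S) ∈ l.sel p :=
  hl.2.2.2.2.1 p hp

lemma ne_sel {p : Set Pt} (hp : p ∈ l.P) : p ≠ l.sel p := by
  intro h
  have hs := (hl.sel_spec hp).1
  rcases hl.2.2.1 with hPS | hSP
  · have := hPS p hp _ hs
    rw [← h] at this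
    exact lt_irrefl _ this
  · have := hSP p hp _ hs
    rw [← h] at this
    exact lt_irrefl _ this

/-- The first point of `p` on `⋃ S` lies on both `p` and `s(p)`, which have distinct
basepoints. -/
lemma firstPoint_snd_pos (hF : IsGrounded F) {p : Set Pt} (hp : p ∈ l.P) :
    0 < (firstPoint p (⋃₀ l.S)).2 := by
  have hpF := hl.1 hp
  have hselF := hl.2.1 (hl.sel_spec hp).1
  have hpg := hF.2.1 p hpF
  have hz := hpg.firstPoint_mem (⋃₀ l.S)
  refine lt_of_le_of_ne (hpg.2.1 hz) fun h => hF.2.2 p hpF _ hselF (hl.ne_sel hp) ?_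
  rw [← hpg.eq_basepoint hz h.symm, ← (hF.2.1 _ hselF).eq_basepoint (hl.sel_spec hp).2 h.symm]

lemma inter_sel_nonempty (hF : IsGrounded F) {q c : Set Pt} (hq : q ∈ l.P) (hc : c ∈ F)
    {z x : Pt} (hz : z ∈ c) (hz2 : 0 < z.2) (hzq : z ∈ l.regionOf q) (hx : x ∈ c)
    (hxE : x ∈ l.exter) (hcq : Disjoint c q) : (c ∩ l.sel q).Nonempty := by
  by_contra h
  have hsel := hl.sel_spec hq
  have hcg := hF.2.1 c hc
  refine (hF.2.1 q (hl.1 hq)).notMem_extOf_of_disjoint (hF.2.1 _ (hl.2.1 hsel.1)) hsel.2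
    hcg.isPathConnected hcg.2.1 hcq (disjoint_iff_inter_eq_empty.2 (not_nonempty_iff_eq_empty.1 h))
    hz hz2 hzq.2 hx ?_ hxE
  exact union_subset (subset_sUnion_of_mem (Or.inl hq)) (subset_sUnion_of_mem (Or.inr hsel.1))

end IsCBracket

namespace IsCBracketSystem

variable {F : Set (Set Pt)} {n : ℕ} {B : Fin n → CBracket} (hB : IsCBracketSystem F B)
include hB

lemma exists_mem_sel_exter {i j : Fin n} (hij : i < j) {p : Set Pt} (hp : p ∈ (B i).P) :
    ∃ x ∈ (B i).sel p, x ∈ (B j).exter := by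
  obtain ⟨x, hxs, hx⟩ := hB.2.2 i _ ((hB.1 i).sel_spec hp).1
  exact ⟨x, hxs, mem_iInter₂.1 hx j hij⟩

lemma sel_notMem_P {i j : Fin n} (hij : i < j) {p : Set Pt} (hp : p ∈ (B i).P) :
    (B i).sel p ∉ (B j).P := fun h =>
  let ⟨_, hxs, hx⟩ := hB.exists_mem_sel_exter hij hp
  hx.1.2 ⟨_, Or.inl h, hxs⟩

lemma inter_sel_nonempty (hF : IsGrounded F) {i j : Fin n} (hij : i < j) {p q : Set Pt}
    (hp : p ∈ (B i).P) (hq : q ∈ (B j).P) (hdisj : Disjoint ((B i).sel p) q) :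
    ((B i).sel p ∩ (B j).sel q).Nonempty := by
  have hl := hB.1 i
  obtain ⟨x, hxs, hx⟩ := hB.exists_mem_sel_exter hij hp
  have hz := (hF.2.1 p (hl.1 hp)).firstPoint_mem (⋃₀ (B i).S)
  exact (hB.1 j).inter_sel_nonempty hF hq (hl.2.1 (hl.sel_spec hp).1) (hl.sel_spec hp).2
    (hl.firstPoint_snd_pos hF hp) (mem_iInter₂.1 (hB.2.1 i p hp j hij hz) q hq) hxs hx hdisj

lemma exists_mem_P_inter_sel_nonempty {k ξ : ℕ}
    (hind : ∀ G : Set (Set Pt), IsGrounded G → cliqueLE G (k - 1) → chi G ≤ ξ)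
    (hF : IsGrounded F) (homega : cliqueLE F k) {t : Fin n} (hchi : (n - 1) * ξ < chi (B t).P)
    {p : Fin n → Set Pt} (hp : ∀ i < t, p i ∈ (B i).P) :
    ∃ q ∈ (B t).P, ∀ i < t, ((B i).sel (p i) ∩ (B t).sel q).Nonempty := by
  have hcard : (Finset.Iio t).card * ξ < chi (B t).P := by
    refine lt_of_le_of_lt (Nat.mul_le_mul_right ξ ?_) hchi
    rw [Fin.card_Iio]
    omega
  obtain ⟨q, hq, hdisj⟩ := exists_mem_disjoint_of_chi_lt hind hF homega (hB.1 t).1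
    (Finset.Iio t) (fun i => (B i).sel (p i)) (fun i hi => by
      rw [Finset.mem_Iio] at hi
      exact ⟨(hB.1 i).2.1 ((hB.1 i).sel_spec (hp i hi)).1, hB.sel_notMem_P hi (hp i hi)⟩) hcard
  exact ⟨q, hq, fun i hi =>
    hB.inter_sel_nonempty hF hi (hp i hi) hq (hdisj i (Finset.mem_Iio.2 hi))⟩

lemma exists_sel_inter_nonempty {k ξ : ℕ}
    (hind : ∀ G : Set (Set Pt), IsGrounded G → cliqueLE G (k - 1) → chi G ≤ ξ)
    (hF : IsGrounded F) (homega : cliqueLE F k) (hchi : ∀ i, (n - 1) * ξ < chi (B i).P) :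
    ∀ m ≤ n, ∃ p : Fin n → Set Pt, (∀ i : Fin n, (i : ℕ) < m → p i ∈ (B i).P) ∧
      ∀ i j : Fin n, i < j → (j : ℕ) < m → ((B i).sel (p i) ∩ (B j).sel (p j)).Nonempty := by
  intro m hm
  induction m with
  | zero => exact ⟨fun _ => ∅, fun _ h => absurd h (Nat.not_lt_zero _),
      fun _ _ _ h => absurd h (Nat.not_lt_zero _)⟩
  | succ m ih =>
    obtain ⟨p, hpP, hpmeet⟩ := ih (by omega)
    set t : Fin n := ⟨m, hm⟩
    obtain ⟨q, hq, hqmeet⟩ :=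
      hB.exists_mem_P_inter_sel_nonempty hind hF homega (hchi t) fun i hi => hpP i hi
    refine ⟨Function.update p t q, fun i hi => ?_, fun i j hij hj => ?_⟩
    · rcases (show i ≤ t from Nat.lt_succ_iff.1 hi).lt_or_eq with hi | rfl
      · rw [Function.update_of_ne hi.ne]
        exact hpP i hi
      · rw [Function.update_self]
        exact hq
    · rcases (show j ≤ t from Nat.lt_succ_iff.1 hj).lt_or_eq with hj | rfl
      · rw [Function.update_of_ne (hij.trans hj).ne, Function.update_of_ne hj.ne]
        exact hpmeet i j hij hj
      · rw [Function.update_of_ne hij.ne, Function.update_self]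
        exact hqmeet i hij

end IsCBracketSystem

theorem bracket_system_clique_general (k ξ : ℕ)
    (hind : ∀ G : Set (Set Pt), IsGrounded G → cliqueLE G (k - 1) → chi G ≤ ξ)
    (F : Set (Set Pt)) (hF : IsGrounded F) (homega : cliqueLE F k)
    (n : ℕ) (B : Fin n → CBracket) (hB : IsCBracketSystem F B)
    (hchi : ∀ i, (n - 1) * ξ < chi (B i).P) :
    ∃ s : Fin n → Set Pt, (∀ i, s i ∈ (B i).S) ∧
      ∀ i j, i ≠ j → (s i ∩ s j).Nonempty := by
  obtain ⟨p, hpP, hpmeet⟩ := hB.exists_sel_inter_nonempty hind hF homega hchi n le_rfl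
  refine ⟨fun i => (B i).sel (p i), fun i => ((hB.1 i).sel_spec (hpP i i.isLt)).1,
    fun i j hij => ?_⟩
  rcases hij.lt_or_gt with h | h
  · exact hpmeet i j h j.isLt
  · exact inter_comm ((B j).sel (p j)) _ ▸ hpmeet j i h i.isLt

/-- A bracket system with large chromatic numbers yields a clique of supports. -/
theorem bracket_system_clique (k ξ : ℕ) (hk : 2 ≤ k)
    (hind : ∀ G : Set (Set Pt), IsGrounded G → cliqueLE G (k - 1) → chi G ≤ ξ)
    (F : Set (Set Pt)) (hF : IsGrounded F) (homega : cliqueLE F k)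
    (n : ℕ) (B : Fin n → CBracket) (hB : IsCBracketSystem F B)
    (hchi : ∀ i, (n - 1) * ξ < chi (B i).P) :
    ∃ s : Fin n → Set Pt, (∀ i, s i ∈ (B i).S) ∧
      ∀ i j, i ≠ j → (s i ∩ s j).Nonempty :=
  bracket_system_clique_general k ξ hind F hF homega n B hB hchi
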